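/- arXiv:2502.18686 — 5 statements merged into one kernel-verified Lean document; each statement's English description precedes it below -/
import Mathlib

section
/- Let n ≥ 1 and let a : Fin n → Fin n → Fin n → Fin n → ℝ be a tensor with the elastic symmetries a_{ijkl} = a_{jikl} = a_{ijlk} = a_{klij}. Suppose that for every unit vector v ∈ ℝⁿ and every q ∈ ℝⁿ with either q parallel to v or q ⊥ v, we have ∑_{i,j,k,l} a_{ijkl} v_i q_j v_k q_l = 0. Then a = 0. -/
/-!
Write `T x q y r = ∑ a_{ijkl} x_i q_j y_k r_l`. Rescaling removes the normalisation of `v`, and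
`q = v` gives `T x x x x = 0`; polarising this quartic gives `T v v v w = 0`, so splitting any `q`
as `t v + w` with `w ⊥ v` shows that `T v q v q = 0` for all `v, q`. Polarising that in `v` and
in `q` makes `T` antisymmetric in its first and third and in its second and fourth slots, which
is incompatible with the symmetry in the first two slots unless `T = 0`.
-/

/-- The symmetries `a_{ijkl} = a_{jikl} = a_{ijlk} = a_{klij}`, read on the form `T x q y r`. -/
structure IsElastic {V : Type*} [AddCommGroup V] [Module ℝ V]
    (T : V →ₗ[ℝ] V →ₗ[ℝ] V →ₗ[ℝ] V →ₗ[ℝ] ℝ) : Prop where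
  swap_left : ∀ x q y r, T x q y r = T q x y r
  swap_right : ∀ x q y r, T x q y r = T x q r y
  swap_pairs : ∀ x q y r, T x q y r = T y r x q

namespace IsElastic

variable {V : Type*} [AddCommGroup V] [Module ℝ V] {T : V →ₗ[ℝ] V →ₗ[ℝ] V →ₗ[ℝ] V →ₗ[ℝ] ℝ}

theorem apply_add_self (hT : IsElastic T) (v w : V) :
    T (v + w) (v + w) (v + w) (v + w) = T v v v v + 4 * T v v v w + 2 * T v v w w
      + 4 * T v w v w + 4 * T v w w w + T w w w w := by
  simp only [map_add, LinearMap.add_apply]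
  have h₁ : T w v v v = T v v v w := (hT.swap_left _ _ _ _).trans (hT.swap_pairs _ _ _ _)
  have h₂ : T v w v v = T v v v w := hT.swap_pairs _ _ _ _
  have h₃ : T v v w v = T v v v w := hT.swap_right _ _ _ _
  have h₄ : T w w w v = T v w w w := (hT.swap_right _ _ _ _).trans (hT.swap_pairs _ _ _ _)
  have h₅ : T w w v w = T v w w w := hT.swap_pairs _ _ _ _
  have h₆ : T w v w w = T v w w w := hT.swap_left _ _ _ _
  have h₇ : T w w v v = T v v w w := hT.swap_pairs _ _ _ _
  have h₈ : T w v w v = T v w v w := (hT.swap_left _ _ _ _).trans (hT.swap_right _ _ _ _)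
  have h₉ : T w v v w = T v w v w := hT.swap_left _ _ _ _
  have h₁₀ : T v w w v = T v w v w := hT.swap_right _ _ _ _
  rw [h₁, h₂, h₃, h₄, h₅, h₆, h₇, h₈, h₉, h₁₀]
  ring

/-- Polarise `x ↦ T x x x x` along `v + s w` for `s = 1, -1, 2`. -/
theorem apply_self_self_self_eq_zero (hT : IsElastic T) (hdiag : ∀ x, T x x x x = 0) (v w : V) :
    T v v v w = 0 := by
  have e₁ := hT.apply_add_self v w
  have e₂ := hT.apply_add_self v ((-1 : ℝ) • w)
  have e₃ := hT.apply_add_self v ((2 : ℝ) • w)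
  simp only [map_smul, LinearMap.smul_apply, smul_eq_mul, hdiag] at e₁ e₂ e₃
  linarith

theorem apply_smul_add (hT : IsElastic T) (hdiag : ∀ x, T x x x x = 0) (t : ℝ) (v w : V) :
    T v (t • v + w) v (t • v + w) = T v w v w := by
  have h₁ : T v v v w = 0 := hT.apply_self_self_self_eq_zero hdiag v w
  have h₂ : T v w v v = 0 := (hT.swap_pairs _ _ _ _).trans h₁
  simp only [map_add, map_smul, LinearMap.add_apply, LinearMap.smul_apply, smul_eq_mul, hdiag,
    h₁, h₂]
  ring

theorem eq_zero_of_biquadratic_eq_zero (hT : IsElastic T) (h : ∀ v q, T v q v q = 0) : T = 0 := by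
  have h₁ : ∀ x y q, T x q y q = 0 := fun x y q => by
    have := h (x + y) q
    simp only [map_add, LinearMap.add_apply, h, hT.swap_pairs y q x q] at this
    linarith
  have anti₂₄ : ∀ x q y r, T x q y r = -T x r y q := fun x q y r => by
    have := h₁ x y (q + r)
    simp only [map_add, LinearMap.add_apply, h₁] at this
    linarith
  have h₂ : ∀ x q r, T x q x r = 0 := fun x q r => by
    have := anti₂₄ x q x r
    rw [hT.swap_pairs x r x q] at this
    linarith
  have anti₁₃ : ∀ x q y r, T x q y r = -T y q x r := fun x q y r => by
    have := h₂ (x + y) q r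
    simp only [map_add, LinearMap.add_apply, h₂] at this
    linarith
  ext x q y r
  have : T x q y r = -T x q y r := calc
    T x q y r = T q x y r := hT.swap_left _ _ _ _
    _ = -T x y q r := by rw [anti₁₃, hT.swap_left y x]
    _ = T x r q y := by rw [anti₂₄]; ring
    _ = -T x q y r := by rw [hT.swap_right, anti₂₄]
  simp only [LinearMap.zero_apply]
  linarith

end IsElastic

section InnerProductSpace

variable {V : Type*} [NormedAddCommGroup V] [InnerProductSpace ℝ V]

def polarizationSet (v : V) : Set V := (ℝ ∙ v : Set V) ∪ (ℝ ∙ v)ᗮ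

theorem polarizationSet_smul {c : ℝ} (hc : c ≠ 0) (v : V) :
    polarizationSet (c • v) = polarizationSet v := by
  rw [polarizationSet, polarizationSet, Submodule.span_singleton_smul_eq (IsUnit.mk0 c hc)]

theorem exists_smul_add_mem_orthogonal_singleton (v q : V) :
    ∃ (t : ℝ) (w : V), w ∈ (ℝ ∙ v)ᗮ ∧ q = t • v + w := by
  have hq : q ∈ (ℝ ∙ v) ⊔ (ℝ ∙ v)ᗮ := by
    rw [Submodule.sup_orthogonal_of_hasOrthogonalProjection]
    exact Submodule.mem_top
  obtain ⟨y, hy, w, hw, rfl⟩ := Submodule.mem_sup.1 hq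
  obtain ⟨t, rfl⟩ := Submodule.mem_span_singleton.1 hy
  exact ⟨t, w, hw, rfl⟩

variable {T : V →ₗ[ℝ] V →ₗ[ℝ] V →ₗ[ℝ] V →ₗ[ℝ] ℝ}

theorem IsElastic.eq_zero_of_forall_polarizationSet (hT : IsElastic T)
    (h : ∀ v, ‖v‖ = 1 → ∀ q ∈ polarizationSet v, T v q v q = 0) : T = 0 := by
  have hQ : ∀ v, ∀ q ∈ polarizationSet v, T v q v q = 0 := by
    intro v q hq
    rcases eq_or_ne v 0 with rfl | hv
    · simp
    have hv' : ‖v‖ ≠ 0 := norm_ne_zero_iff.2 hv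
    have hu := h (‖v‖⁻¹ • v) (by rw [norm_smul, norm_inv, norm_norm, inv_mul_cancel₀ hv']) q
      (by rwa [polarizationSet_smul (inv_ne_zero hv')])
    calc T v q v q = ‖v‖ ^ 2 * T (‖v‖⁻¹ • v) q (‖v‖⁻¹ • v) q := by
          simp only [map_smul, LinearMap.smul_apply, smul_eq_mul]
          field_simp
      _ = 0 := by rw [hu, mul_zero]
  have hdiag : ∀ x, T x x x x = 0 := fun x =>
    hQ x x (Or.inl (Submodule.mem_span_singleton_self x))
  refine hT.eq_zero_of_biquadratic_eq_zero fun v q => ?_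
  obtain ⟨t, w, hw, rfl⟩ := exists_smul_add_mem_orthogonal_singleton v q
  rw [hT.apply_smul_add hdiag]
  exact hQ v w (Or.inr hw)

end InnerProductSpace

section Tensor

variable {ι : Type*} [Fintype ι]

noncomputable def tensorForm (a : ι → ι → ι → ι → ℝ) :
    EuclideanSpace ℝ ι →ₗ[ℝ] EuclideanSpace ℝ ι →ₗ[ℝ] EuclideanSpace ℝ ι →ₗ[ℝ]
      EuclideanSpace ℝ ι →ₗ[ℝ] ℝ :=
  ∑ i, ∑ j, ∑ k, ∑ l, a i j k l • (EuclideanSpace.proj i).toLinearMap.smulRight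
    ((EuclideanSpace.proj j).toLinearMap.smulRight
      ((EuclideanSpace.proj k).toLinearMap.smulRight (EuclideanSpace.proj l).toLinearMap))

theorem tensorForm_apply (a : ι → ι → ι → ι → ℝ) (x q y r : EuclideanSpace ℝ ι) :
    tensorForm a x q y r = ∑ i, ∑ j, ∑ k, ∑ l, a i j k l * x i * q j * y k * r l := by
  simp only [tensorForm, LinearMap.coe_sum, LinearMap.coe_smul, LinearMap.coe_smulRight,
    ContinuousLinearMap.coe_coe, Finset.sum_apply, Pi.smul_apply, EuclideanSpace.coe_proj,
    smul_eq_mul, mul_assoc]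

theorem Fintype.sum_sum_sum_sum_swap_pairs {M : Type*} [AddCommMonoid M] (f : ι → ι → ι → ι → M) :
    ∑ i, ∑ j, ∑ k, ∑ l, f i j k l = ∑ i, ∑ j, ∑ k, ∑ l, f k l i j := by
  calc ∑ i, ∑ j, ∑ k, ∑ l, f i j k l = ∑ p : ι × ι, ∑ m : ι × ι, f p.1 p.2 m.1 m.2 := by
        simp only [Fintype.sum_prod_type]
    _ = ∑ m : ι × ι, ∑ p : ι × ι, f p.1 p.2 m.1 m.2 := Finset.sum_comm
    _ = ∑ i, ∑ j, ∑ k, ∑ l, f k l i j := by simp only [Fintype.sum_prod_type]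

theorem isElastic_tensorForm (a : ι → ι → ι → ι → ℝ) (h₁₂ : ∀ i j k l, a i j k l = a j i k l)
    (h₃₄ : ∀ i j k l, a i j k l = a i j l k) (hpairs : ∀ i j k l, a i j k l = a k l i j) :
    IsElastic (tensorForm a) where
  swap_left x q y r := by
    rw [tensorForm_apply, tensorForm_apply, Finset.sum_comm]
    refine Fintype.sum_congr _ _ fun i => Fintype.sum_congr _ _ fun j =>
      Fintype.sum_congr _ _ fun k => Fintype.sum_congr _ _ fun l => ?_
    rw [h₁₂]
    ring
  swap_right x q y r := by
    rw [tensorForm_apply, tensorForm_apply]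
    refine Fintype.sum_congr _ _ fun i => Fintype.sum_congr _ _ fun j => ?_
    rw [Finset.sum_comm]
    refine Fintype.sum_congr _ _ fun k => Fintype.sum_congr _ _ fun l => ?_
    rw [h₃₄]
    ring
  swap_pairs x q y r := by
    rw [tensorForm_apply, tensorForm_apply, Fintype.sum_sum_sum_sum_swap_pairs]
    refine Fintype.sum_congr _ _ fun i => Fintype.sum_congr _ _ fun j =>
      Fintype.sum_congr _ _ fun k => Fintype.sum_congr _ _ fun l => ?_
    rw [hpairs]
    ring

theorem tensorForm_single [DecidableEq ι] (a : ι → ι → ι → ι → ℝ) (i j k l : ι) :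
    tensorForm a (EuclideanSpace.single i 1) (EuclideanSpace.single j 1)
      (EuclideanSpace.single k 1) (EuclideanSpace.single l 1) = a i j k l := by
  simp [tensorForm_apply]

end Tensor

theorem no_pointwise_kernel_rank2_general (n : ℕ)
    (a : Fin n → Fin n → Fin n → Fin n → ℝ)
    (hsymm1 : ∀ i j k l, a i j k l = a j i k l)
    (hsymm2 : ∀ i j k l, a i j k l = a i j l k)
    (hsymm3 : ∀ i j k l, a i j k l = a k l i j)
    (h : ∀ v q : Fin n → ℝ, (∑ i, v i ^ 2) = 1 →
      ((∃ t : ℝ, q = t • v) ∨ (∑ i, q i * v i) = 0) →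
      (∑ i, ∑ j, ∑ k, ∑ l, a i j k l * v i * q j * v k * q l) = 0) :
    a = 0 := by
  have hT : tensorForm a = 0 := by
    refine (isElastic_tensorForm a hsymm1 hsymm2 hsymm3).eq_zero_of_forall_polarizationSet
      fun v hv q hq => ?_
    rw [tensorForm_apply]
    refine h v.ofLp q.ofLp (by rw [← EuclideanSpace.real_norm_sq_eq, hv, one_pow]) ?_
    rcases hq with hq | hq
    · obtain ⟨t, rfl⟩ := Submodule.mem_span_singleton.1 hq
      exact Or.inl ⟨t, rfl⟩
    · right
      simpa [PiLp.inner_apply] using Submodule.mem_orthogonal_singleton_iff_inner_right.1 hq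
  funext i j k l
  rw [← tensorForm_single a i j k l, hT]
  rfl

/-- An elastic 2-tensor `a` on ℝⁿ (with symmetries
`a_{ijkl} = a_{jikl} = a_{ijlk} = a_{klij}`) that satisfies
`∑ a_{ijkl} v_i q_j v_k q_l = 0` for every unit vector `v` and every
polarization `q ∈ ℝv ∪ v⊥` must vanish. -/
theorem no_pointwise_kernel_rank2 (n : ℕ) (hn : 1 ≤ n)
    (a : Fin n → Fin n → Fin n → Fin n → ℝ)
    (hsymm1 : ∀ i j k l, a i j k l = a j i k l)
    (hsymm2 : ∀ i j k l, a i j k l = a i j l k)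
    (hsymm3 : ∀ i j k l, a i j k l = a k l i j)
    (h : ∀ v q : Fin n → ℝ, (∑ i, v i ^ 2) = 1 →
      ((∃ t : ℝ, q = t • v) ∨ (∑ i, q i * v i) = 0) →
      (∑ i, ∑ j, ∑ k, ∑ l, a i j k l * v i * q j * v k * q l) = 0) :
    a = 0 :=
  no_pointwise_kernel_rank2_general n a hsymm1 hsymm2 hsymm3 h
end

section
/- Let n ≥ 1 and fix a nonzero vector p ∈ ℝⁿ. Define μ_p : ℝⁿ → (ℝⁿ)⊗4 by (μ_p W)_{ijkl} = (1/4)(p_i W_j + p_j W_i) δ_{kl} + (1/4)(p_k W_l + p_l W_k) δ_{ij}, and define λ_p : (ℝⁿ)⊗4 → ℝⁿ by (λ_p T)_i = 4|p|⁻⁴ ∑_{β,λ,μ} T_{iβλμ} p_β p_λ p_μ. Then for every W ∈ ℝⁿ with ⟨W,p⟩ = 0, we have λ_p(μ_p W) = W. -/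
/-!
Contracting `μ_p W` against `p ⊗ p ⊗ p` in its last three slots, the `δ_{kl}` term gives
`¼ (p_i ⟨W,p⟩ + W_i |p|²) |p|²` and the `δ_{ij}` term gives `½ p_i ⟨W,p⟩ |p|²`.
For `W ⊥ p` only `¼ |p|⁴ W_i` survives, which `λ_p` rescales to `W_i`.
-/

open Finset

variable {ι : Type*} [Fintype ι]

lemma sum_sq_ne_zero {p : ι → ℝ} (hp : p ≠ 0) : ∑ m, p m ^ 2 ≠ 0 := by
  simpa [sq, dotProduct] using (dotProduct_self_eq_zero (v := p)).not.mpr hp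

variable [DecidableEq ι]

lemma contract_symm_tensor_delta (p W : ι → ℝ) (i : ι) :
    ∑ β, ∑ l, ∑ m, (1/4) * (p i * W β + p β * W i) * (if l = m then (1:ℝ) else 0)
        * p β * p l * p m
      = (1/4) * (p i * ∑ m, W m * p m + W i * ∑ m, p m ^ 2) * ∑ m, p m ^ 2 := by
  have h_inner : ∑ β, (p i * W β + p β * W i) * p β
      = p i * ∑ m, W m * p m + W i * ∑ m, p m ^ 2 := by
    rw [mul_sum, mul_sum, ← sum_add_distrib]
    exact sum_congr rfl fun _ _ => by ring
  simp only [mul_ite, ite_mul, mul_one, mul_zero, zero_mul, sum_ite_eq, mem_univ, if_true]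
  rw [← h_inner, mul_assoc, sum_mul_sum, mul_sum]
  refine sum_congr rfl fun β _ => ?_
  rw [mul_sum]
  exact sum_congr rfl fun l _ => by ring

lemma contract_delta_symm_tensor (p W : ι → ℝ) (i : ι) :
    ∑ β, ∑ l, ∑ m, (1/4) * (p l * W m + p m * W l) * (if i = β then (1:ℝ) else 0)
        * p β * p l * p m
      = (1/2) * p i * (∑ m, W m * p m) * ∑ m, p m ^ 2 := by
  rw [Fintype.sum_eq_single i fun β hβ => by simp [Ne.symm hβ]]
  calc _ = (1/4) * p i *
          ((∑ l, p l ^ 2) * (∑ m, W m * p m) + (∑ l, W l * p l) * ∑ m, p m ^ 2) := by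
        rw [sum_mul_sum, sum_mul_sum, ← sum_add_distrib, mul_sum]
        refine sum_congr rfl fun l _ => ?_
        rw [← sum_add_distrib, mul_sum]
        exact sum_congr rfl fun m _ => by simp only [if_true]; ring
    _ = _ := by ring

theorem lambda_left_inverse_of_mu_general (n : ℕ)
    (p : Fin n → ℝ) (hp : p ≠ 0)
    (W : Fin n → ℝ) (hW : (∑ i, W i * p i) = 0)
    (T : Fin n → Fin n → Fin n → Fin n → ℝ)
    (hT : T = fun i j k l =>
      (1/4) * (p i * W j + p j * W i) * (if k = l then (1:ℝ) else 0)
      + (1/4) * (p k * W l + p l * W k) * (if i = j then (1:ℝ) else 0)) :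
    ∀ i, 4 * ((∑ m, p m ^ 2) ^ 2)⁻¹ *
      (∑ β, ∑ l, ∑ m, T i β l m * p β * p l * p m) = W i := by
  intro i
  subst hT
  simp only [add_mul, sum_add_distrib]
  rw [contract_symm_tensor_delta, contract_delta_symm_tensor, hW]
  field_simp [sum_sq_ne_zero hp]
  ring

/-- With `(μ_p W)_{ijkl} = (1/4)(p_i W_j + p_j W_i) δ_{kl}
+ (1/4)(p_k W_l + p_l W_k) δ_{ij}` and
`(λ_p T)_i = 4|p|⁻⁴ ∑ T_{iβλμ} p_β p_λ p_μ`, we have `λ_p (μ_p W) = W`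
for every `W ⊥ p`. -/
theorem lambda_left_inverse_of_mu (n : ℕ) (hn : 1 ≤ n)
    (p : Fin n → ℝ) (hp : p ≠ 0)
    (W : Fin n → ℝ) (hW : (∑ i, W i * p i) = 0)
    (T : Fin n → Fin n → Fin n → Fin n → ℝ)
    (hT : T = fun i j k l =>
      (1/4) * (p i * W j + p j * W i) * (if k = l then (1:ℝ) else 0)
      + (1/4) * (p k * W l + p l * W k) * (if i = j then (1:ℝ) else 0)) :
    ∀ i, 4 * ((∑ m, p m ^ 2) ^ 2)⁻¹ *
      (∑ β, ∑ l, ∑ m, T i β l m * p β * p l * p m) = W i :=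
  lambda_left_inverse_of_mu_general n p hp W hW T hT
end

section
/- Fix a nonzero p ∈ ℝⁿ. With the notation of the pointwise decomposition, the space E of elastic 2-tensors decomposes as an orthogonal direct sum E = A_p ⊕ B_p ⊕ C_p, where A_p = {μ_p W : W ∈ ℝⁿ, W ⊥ p}, B_p = {ι_p h : h ∈ Sym²(ℝⁿ)}, and C_p = {S ∈ E : μ_p* S = 0 and ι_p* S = 0}. Moreover A_p ⊕ B_p is orthogonal to C_p. -/
open scoped BigOperators

/-- Elastic symmetries of a 4-tensor. -/
def Elastic {n : ℕ} (T : Fin n → Fin n → Fin n → Fin n → ℝ) : Prop :=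
  (∀ i j k l, T i j k l = T j i k l) ∧ (∀ i j k l, T i j k l = T i j l k) ∧
    (∀ i j k l, T i j k l = T k l i j)

/-- The symbol `μ_p` of the operator `K`. -/
noncomputable def muP {n : ℕ} (p W : Fin n → ℝ) : Fin n → Fin n → Fin n → Fin n → ℝ :=
  fun i j k l =>
    (1/4) * (p i * W j + p j * W i) * (if k = l then (1:ℝ) else 0)
    + (1/4) * (p k * W l + p l * W k) * (if i = j then (1:ℝ) else 0)

/-- The symbol `ι_p` of the operator `H`. -/
noncomputable def iotaP {n : ℕ} (p : Fin n → ℝ) (h : Fin n → Fin n → ℝ) :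
    Fin n → Fin n → Fin n → Fin n → ℝ :=
  fun i j k l => (1/2) * (p i * p j * h k l + p k * p l * h i j)

/-- The dual symbol `μ_p*`. -/
noncomputable def muPStar {n : ℕ} (p : Fin n → ℝ)
    (T : Fin n → Fin n → Fin n → Fin n → ℝ) : Fin n → ℝ :=
  fun i => ∑ β, ∑ l, ∑ m, p β * (if l = m then (1:ℝ) else 0) * T i β l m

/-- The dual symbol `ι_p*`. -/
noncomputable def iotaPStar {n : ℕ} (p : Fin n → ℝ)
    (T : Fin n → Fin n → Fin n → Fin n → ℝ) : Fin n → Fin n → ℝ :=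
  fun i j => ∑ l, ∑ m, T i j l m * p l * p m

/-- Membership in `A_p = {μ_p W : W ⊥ p}`. -/
def MemA {n : ℕ} (p : Fin n → ℝ) (A : Fin n → Fin n → Fin n → Fin n → ℝ) : Prop :=
  ∃ W : Fin n → ℝ, (∑ i, W i * p i) = 0 ∧ A = muP p W

/-- Membership in `B_p = {ι_p h : h ∈ Sym²(ℝⁿ)}`. -/
def MemB {n : ℕ} (p : Fin n → ℝ) (B : Fin n → Fin n → Fin n → Fin n → ℝ) : Prop :=
  ∃ h : Fin n → Fin n → ℝ, (∀ i j, h i j = h j i) ∧ B = iotaP p h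

/-- Membership in `C_p = {S ∈ E : μ_p* S = 0, ι_p* S = 0}`. -/
def MemC {n : ℕ} (p : Fin n → ℝ) (C : Fin n → Fin n → Fin n → Fin n → ℝ) : Prop :=
  Elastic C ∧ muPStar p C = 0 ∧ iotaPStar p C = 0

/-- The Euclidean inner product of 4-tensors. -/
noncomputable def tdot {n : ℕ} (S T : Fin n → Fin n → Fin n → Fin n → ℝ) : ℝ :=
  ∑ i, ∑ j, ∑ k, ∑ l, S i j k l * T i j k l

/-!
The full contraction `tdot` is positive definite. Writing `μ_p W` and `ι_p h` as combinations of
outer products of the 2-tensors `δ`, `p ⊗ W`, `p ⊗ p`, `h`, the symmetries of an elastic `C` give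
`⟨μ_p W, C⟩ = W · μ_p* C`, `⟨ι_p h, C⟩ = ⟨h, ι_p* C⟩` and `p · μ_p* C = tr ι_p* C`. Testing an
elastic `C ⊥ A_p + B_p` first against `ι_p (ι_p* C)` and then against `μ_p (μ_p* C)` (admissible,
since `p · μ_p* C = tr ι_p* C = 0`) shows that `C_p` is the orthogonal complement of `A_p + B_p`
in `E`; this gives existence and orthogonality. Uniqueness reduces to `A_p ∩ B_p = 0`: the
functional `X ↦ |p|² X(δ, p ⊗ W) - X(p ⊗ p, p ⊗ W)` vanishes on `B_p` and takes the value
`(n - 1) |p|⁴ |W|² / 4` at `μ_p W` for `W ⊥ p`, while for `n = 1` the condition `W ⊥ p` alone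
forces `p = 0` or `W = 0`.
-/

open Finset

abbrev Tensor4 (n : ℕ) := Fin n → Fin n → Fin n → Fin n → ℝ

variable {n : ℕ}

def delta (n : ℕ) : Fin n → Fin n → ℝ := fun i j => if i = j then 1 else 0

def dyad (u v : Fin n → ℝ) : Fin n → Fin n → ℝ := fun i j => u i * v j

def outer (a b : Fin n → Fin n → ℝ) : Tensor4 n := fun i j k l => a i j * b k l

def mdot (a b : Fin n → Fin n → ℝ) : ℝ := ∑ i, ∑ j, a i j * b i j

lemma tdot_comm (S T : Tensor4 n) : tdot S T = tdot T S := by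
  simp only [tdot, mul_comm]

lemma tdot_add_left (S S' T : Tensor4 n) : tdot (S + S') T = tdot S T + tdot S' T := by
  simp only [tdot, Pi.add_apply, add_mul, sum_add_distrib]

lemma tdot_smul_left (c : ℝ) (S T : Tensor4 n) : tdot (c • S) T = c * tdot S T := by
  simp only [tdot, Pi.smul_apply, smul_eq_mul, mul_sum, mul_assoc]

lemma tdot_self_eq_zero {T : Tensor4 n} : tdot T T = 0 ↔ T = 0 := by
  let t : (Fin n × Fin n) × (Fin n × Fin n) → ℝ := fun x => T x.1.1 x.1.2 x.2.1 x.2.2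
  have ht : tdot T T = t ⬝ᵥ t := by simp only [tdot, dotProduct, t, Fintype.sum_prod_type]
  rw [ht, dotProduct_self_eq_zero]
  refine ⟨fun h => ?_, fun h => funext fun x => by simp [t, h]⟩
  ext i j k l
  exact congrFun h ((i, j), (k, l))

lemma mdot_self_eq_zero {a : Fin n → Fin n → ℝ} : mdot a a = 0 ↔ a = 0 := by
  refine ⟨fun h => ?_, fun h => by simp [h, mdot]⟩
  rw [mdot, sum_eq_zero_iff_of_nonneg fun i _ => sum_nonneg fun j _ => mul_self_nonneg _] at h
  ext i j
  exact congrFun (dotProduct_self_eq_zero.1 (h i (mem_univ _))) j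

noncomputable def tdotForm (n : ℕ) : LinearMap.BilinForm ℝ (Tensor4 n) :=
  LinearMap.mk₂ ℝ tdot tdot_add_left tdot_smul_left
    (fun S T T' => by simp only [tdot_comm S, tdot_add_left])
    (fun c S T => by simp only [tdot_comm S, tdot_smul_left, smul_eq_mul])

lemma tdotForm_apply (S T : Tensor4 n) : tdotForm n S T = tdot S T := rfl

lemma isCompl_orthogonal_tdotForm (V : Submodule ℝ (Tensor4 n)) :
    IsCompl V ((tdotForm n).orthogonal V) := by
  refine (LinearMap.BilinForm.isCompl_orthogonal_iff_disjoint
    (fun S T h => by rwa [tdotForm_apply, tdot_comm])).2 ?_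
  exact Submodule.disjoint_def.2 fun T hV hV' => tdot_self_eq_zero.1 (hV' T hV)

lemma tdot_outer_outer (a b c d : Fin n → Fin n → ℝ) :
    tdot (outer a b) (outer c d) = mdot a c * mdot b d := by
  simp only [tdot, outer, mdot]
  simp only [sum_mul]
  simp only [mul_sum]
  ac_rfl

lemma sum_pair_swap (F : Fin n → Fin n → Fin n → Fin n → ℝ) :
    ∑ i, ∑ j, ∑ k, ∑ l, F i j k l = ∑ k, ∑ l, ∑ i, ∑ j, F i j k l := by
  calc ∑ i, ∑ j, ∑ k, ∑ l, F i j k l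
      = ∑ x : Fin n × Fin n, ∑ y : Fin n × Fin n, F x.1 x.2 y.1 y.2 := by
        simp only [Fintype.sum_prod_type]
    _ = ∑ y : Fin n × Fin n, ∑ x : Fin n × Fin n, F x.1 x.2 y.1 y.2 := sum_comm
    _ = _ := by simp only [Fintype.sum_prod_type]

lemma tdot_outer_comm {C : Tensor4 n} (hC : ∀ i j k l, C i j k l = C k l i j)
    (a b : Fin n → Fin n → ℝ) : tdot (outer a b) C = tdot (outer b a) C := by
  simp only [tdot, outer]
  rw [sum_pair_swap]
  congr! 4 with i _ j _ k _ l _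
  rw [hC k l i j, mul_comm (a k l)]

lemma tdot_outer_dyad_comm {C : Tensor4 n} (hC : ∀ i j k l, C i j k l = C j i k l)
    (u v : Fin n → ℝ) (b : Fin n → Fin n → ℝ) :
    tdot (outer (dyad u v) b) C = tdot (outer (dyad v u) b) C := by
  simp only [tdot, outer, dyad]
  rw [sum_comm]
  congr! 4 with i _ j _ k _ l _
  rw [hC j i k l, mul_comm (u j)]

lemma mdot_delta_dyad (u v : Fin n → ℝ) : mdot (delta n) (dyad u v) = u ⬝ᵥ v := by
  simp [mdot, delta, dyad, dotProduct]

lemma mdot_dyad_delta (u v : Fin n → ℝ) : mdot (dyad u v) (delta n) = u ⬝ᵥ v := by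
  simp [mdot, delta, dyad, dotProduct]

lemma mdot_delta_delta : mdot (delta n) (delta n) = n := by
  simp [mdot, delta]

lemma mdot_dyad_dyad (a b c d : Fin n → ℝ) :
    mdot (dyad a b) (dyad c d) = (a ⬝ᵥ c) * (b ⬝ᵥ d) := by
  simp only [mdot, dyad, dotProduct]
  simp only [sum_mul]
  simp only [mul_sum]
  ac_rfl

section Symbols

variable (p : Fin n → ℝ)

lemma muP_eq_outer (W : Fin n → ℝ) :
    muP p W = (1 / 4 : ℝ) • (outer (dyad p W) (delta n) + outer (dyad W p) (delta n)
      + outer (delta n) (dyad p W) + outer (delta n) (dyad W p)) := by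
  ext i j k l
  simp only [muP, outer, dyad, delta, Pi.add_apply, Pi.smul_apply, smul_eq_mul]
  ring

lemma iotaP_eq_outer (h : Fin n → Fin n → ℝ) :
    iotaP p h = (1 / 2 : ℝ) • (outer (dyad p p) h + outer h (dyad p p)) := by
  ext i j k l
  simp only [iotaP, outer, dyad, Pi.add_apply, Pi.smul_apply, smul_eq_mul]
  ring

lemma tdot_outer_dyad_delta (W : Fin n → ℝ) (C : Tensor4 n) :
    tdot (outer (dyad W p) (delta n)) C = W ⬝ᵥ muPStar p C := by
  simp only [tdot, outer, muPStar, dotProduct, dyad, delta, mul_sum]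
  ac_rfl

lemma tdot_outer_dyad_self (h : Fin n → Fin n → ℝ) (C : Tensor4 n) :
    tdot (outer h (dyad p p)) C = mdot h (iotaPStar p C) := by
  simp only [tdot, outer, mdot, iotaPStar, dyad, mul_sum]
  ac_rfl

variable {p} {C : Tensor4 n}

lemma tdot_muP (hC : Elastic C) (W : Fin n → ℝ) : tdot (muP p W) C = W ⬝ᵥ muPStar p C := by
  rw [muP_eq_outer, tdot_smul_left, tdot_add_left, tdot_add_left, tdot_add_left,
    tdot_outer_comm hC.2.2 (delta n), tdot_outer_comm hC.2.2 (delta n),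
    tdot_outer_dyad_comm hC.1 p W, tdot_outer_dyad_delta]
  ring

lemma tdot_iotaP (hC : ∀ i j k l, C i j k l = C k l i j) (h : Fin n → Fin n → ℝ) :
    tdot (iotaP p h) C = mdot h (iotaPStar p C) := by
  rw [iotaP_eq_outer, tdot_smul_left, tdot_add_left, tdot_outer_comm hC (dyad p p),
    tdot_outer_dyad_self]
  ring

lemma dotProduct_muPStar (hC : ∀ i j k l, C i j k l = C k l i j) :
    p ⬝ᵥ muPStar p C = mdot (delta n) (iotaPStar p C) := by
  rw [← tdot_outer_dyad_delta, tdot_outer_comm hC, tdot_outer_dyad_self]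

lemma iotaPStar_symm (hC : Elastic C) (i j : Fin n) : iotaPStar p C i j = iotaPStar p C j i := by
  simp only [iotaPStar, hC.1 i j]

end Symbols

lemma Submodule.eq_and_eq_of_add_eq_add {R M : Type*} [Ring R] [AddCommGroup M] [Module R M]
    {P Q : Submodule R M} (hPQ : Disjoint P Q) {a a' b b' : M} (ha : a ∈ P) (ha' : a' ∈ P)
    (hb : b ∈ Q) (hb' : b' ∈ Q) (h : a + b = a' + b') : a = a' ∧ b = b' := by
  have hab : a - a' = b' - b := by rw [sub_eq_sub_iff_add_eq_add, h, add_comm]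
  have h0 := Submodule.disjoint_def.1 hPQ _ (sub_mem ha ha') (hab ▸ sub_mem hb' hb)
  exact ⟨sub_eq_zero.1 h0, (sub_eq_zero.1 (hab ▸ h0)).symm⟩

section Subspaces

variable (p : Fin n → ℝ)

def elasticSubmodule (n : ℕ) : Submodule ℝ (Tensor4 n) where
  carrier := {T | Elastic T}
  zero_mem' := by simp [Elastic]
  add_mem' := by
    rintro S T ⟨hS₁, hS₂, hS₃⟩ ⟨hT₁, hT₂, hT₃⟩
    exact ⟨fun i j k l => by simp [hS₁ i j k l, hT₁ i j k l],
      fun i j k l => by simp [hS₂ i j k l, hT₂ i j k l],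
      fun i j k l => by simp [hS₃ i j k l, hT₃ i j k l]⟩
  smul_mem' := by
    rintro c T ⟨hT₁, hT₂, hT₃⟩
    exact ⟨fun i j k l => by simp [hT₁ i j k l], fun i j k l => by simp [hT₂ i j k l],
      fun i j k l => by simp [hT₃ i j k l]⟩

def muPSubmodule : Submodule ℝ (Tensor4 n) where
  carrier := {A | MemA p A}
  zero_mem' := ⟨0, by simp, by ext; simp [muP]⟩
  add_mem' := by
    rintro _ _ ⟨W, hW, rfl⟩ ⟨W', hW', rfl⟩
    refine ⟨W + W', by simp [add_mul, sum_add_distrib, hW, hW'], ?_⟩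
    ext; simp only [muP, Pi.add_apply]; split_ifs <;> ring
  smul_mem' := by
    rintro c _ ⟨W, hW, rfl⟩
    refine ⟨c • W, by simp [mul_assoc, ← mul_sum, hW], ?_⟩
    ext; simp only [muP, Pi.smul_apply, smul_eq_mul]; split_ifs <;> ring

def iotaPSubmodule : Submodule ℝ (Tensor4 n) where
  carrier := {B | MemB p B}
  zero_mem' := ⟨0, by simp, by ext; simp [iotaP]⟩
  add_mem' := by
    rintro _ _ ⟨h, hh, rfl⟩ ⟨h', hh', rfl⟩
    exact ⟨h + h', fun i j => by simp [hh i j, hh' i j], by ext; simp [iotaP]; ring⟩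
  smul_mem' := by
    rintro c _ ⟨h, hh, rfl⟩
    exact ⟨c • h, fun i j => by simp [hh i j], by ext; simp [iotaP]; ring⟩

lemma muPSubmodule_le_elasticSubmodule : muPSubmodule p ≤ elasticSubmodule n := by
  rintro _ ⟨W, -, rfl⟩
  refine ⟨fun i j k l => ?_, fun i j k l => ?_, fun i j k l => ?_⟩ <;> simp only [muP]
  · simp only [@eq_comm _ j i]; ring
  · simp only [@eq_comm _ l k]; ring
  · ring

lemma iotaPSubmodule_le_elasticSubmodule : iotaPSubmodule p ≤ elasticSubmodule n := by
  rintro _ ⟨h, hh, rfl⟩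
  refine ⟨fun i j k l => ?_, fun i j k l => ?_, fun i j k l => ?_⟩ <;> simp only [iotaP]
  · rw [hh j i]; ring
  · rw [hh l k]; ring
  · ring

variable {p}

lemma memC_iff_mem_orthogonal {C : Tensor4 n} (hC : Elastic C) :
    MemC p C ↔ C ∈ (tdotForm n).orthogonal (muPSubmodule p ⊔ iotaPSubmodule p) := by
  refine ⟨fun ⟨_, hμ, hι⟩ => fun v hv => ?_, fun hO => ⟨hC, ?_⟩⟩
  · obtain ⟨_, ⟨W, -, rfl⟩, _, ⟨h, -, rfl⟩, rfl⟩ := Submodule.mem_sup.1 hv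
    simp [tdotForm_apply, tdot_muP hC, tdot_iotaP hC.2.2, hμ, hι, mdot]
  have hι : iotaPStar p C = 0 := by
    have := hO (iotaP p (iotaPStar p C))
      (Submodule.mem_sup_right ⟨_, iotaPStar_symm hC, rfl⟩)
    rwa [tdotForm_apply, tdot_iotaP hC.2.2, mdot_self_eq_zero] at this
  have hμp : muPStar p C ⬝ᵥ p = 0 := by
    rw [dotProduct_comm, dotProduct_muPStar hC.2.2, hι]
    simp [mdot]
  have := hO (muP p (muPStar p C)) (Submodule.mem_sup_left ⟨_, hμp, rfl⟩)
  rw [tdotForm_apply, tdot_muP hC, dotProduct_self_eq_zero] at this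
  exact ⟨this, hι⟩

lemma disjoint_muPSubmodule_iotaPSubmodule : Disjoint (muPSubmodule p) (iotaPSubmodule p) := by
  refine Submodule.disjoint_def.2 ?_
  rintro _ ⟨W, hW, rfl⟩ ⟨h, -, hWh⟩
  let probe : Tensor4 n → ℝ := fun X =>
    (p ⬝ᵥ p) * tdot X (outer (delta n) (dyad p W)) - tdot X (outer (dyad p p) (dyad p W))
  have hW' : p ⬝ᵥ W = 0 := by rw [dotProduct_comm]; exact hW
  have probe_muP : probe (muP p W) = ((n : ℝ) - 1) / 4 * (p ⬝ᵥ p) ^ 2 * (W ⬝ᵥ W) := by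
    simp only [probe, muP_eq_outer, tdot_smul_left, tdot_add_left, tdot_outer_outer,
      mdot_delta_delta, mdot_delta_dyad, mdot_dyad_delta, mdot_dyad_dyad]
    rw [dotProduct_comm W p, hW']
    ring
  have probe_iotaP : probe (iotaP p h) = 0 := by
    simp only [probe, iotaP_eq_outer, tdot_smul_left, tdot_add_left, tdot_outer_outer,
      mdot_dyad_delta, mdot_dyad_dyad, hW']
    ring
  have hpW : p ⬝ᵥ p = 0 ∨ W ⬝ᵥ W = 0 := by
    rcases eq_or_ne n 1 with rfl | hn
    · have : (p ⬝ᵥ p) * (W ⬝ᵥ W) = (p ⬝ᵥ W) ^ 2 := by simp [dotProduct]; ring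
      exact mul_eq_zero.1 (by rw [this, hW']; ring)
    · have key : ((n : ℝ) - 1) / 4 * (p ⬝ᵥ p) ^ 2 * (W ⬝ᵥ W) = 0 := by
        rw [← probe_muP, hWh, probe_iotaP]
      simpa [sub_eq_zero, hn] using key
  rcases hpW with hp | hW0
  · rw [dotProduct_self_eq_zero.1 hp]; ext; simp [muP]
  · rw [dotProduct_self_eq_zero.1 hW0]; ext; simp [muP]

end Subspaces

theorem pointwise_helmholtz_decomposition_general (n : ℕ) (p : Fin n → ℝ) :
    (∀ T : Fin n → Fin n → Fin n → Fin n → ℝ, Elastic T →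
      ∃! x : (Fin n → Fin n → Fin n → Fin n → ℝ) × (Fin n → Fin n → Fin n → Fin n → ℝ)
          × (Fin n → Fin n → Fin n → Fin n → ℝ),
        MemA p x.1 ∧ MemB p x.2.1 ∧ MemC p x.2.2 ∧ T = x.1 + x.2.1 + x.2.2)
    ∧ (∀ A B C : Fin n → Fin n → Fin n → Fin n → ℝ,
        MemA p A → MemB p B → MemC p C → tdot (A + B) C = 0) := by
  set V := muPSubmodule p ⊔ iotaPSubmodule p
  have hV := isCompl_orthogonal_tdotForm V
  have hVE : V ≤ elasticSubmodule n :=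
    sup_le (muPSubmodule_le_elasticSubmodule p) (iotaPSubmodule_le_elasticSubmodule p)
  refine ⟨fun T hT => ?_, fun A B C hA hB hC =>
    (memC_iff_mem_orthogonal hC.1).1 hC (A + B) (Submodule.add_mem_sup hA hB)⟩
  obtain ⟨v, C, hv, hC, rfl⟩ := Submodule.codisjoint_iff_exists_add_eq.1 hV.codisjoint T
  obtain ⟨A, hA, B, hB, rfl⟩ := Submodule.mem_sup.1 hv
  have hCE : Elastic C := by
    have := sub_mem (show A + B + C ∈ elasticSubmodule n from hT) (hVE hv)
    rwa [add_sub_cancel_left] at this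
  refine ⟨(A, B, C), ⟨hA, hB, (memC_iff_mem_orthogonal hCE).2 hC, rfl⟩, ?_⟩
  rintro ⟨A', B', C'⟩ ⟨hA', hB', hC', hT'⟩
  obtain ⟨hAB, rfl⟩ := Submodule.eq_and_eq_of_add_eq_add hV.disjoint
    (Submodule.add_mem_sup hA' hB') hv ((memC_iff_mem_orthogonal hC'.1).1 hC') hC hT'.symm
  obtain ⟨rfl, rfl⟩ := Submodule.eq_and_eq_of_add_eq_add disjoint_muPSubmodule_iotaPSubmodule
    hA' hA hB' hB hAB
  rfl

/-- For nonzero `p` the space `E` of elastic 2-tensors decomposes as the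
direct sum `E = A_p ⊕ B_p ⊕ C_p` with `A_p ⊕ B_p` orthogonal to `C_p`. -/
theorem pointwise_helmholtz_decomposition (n : ℕ) (p : Fin n → ℝ) (hp : p ≠ 0) :
    (∀ T : Fin n → Fin n → Fin n → Fin n → ℝ, Elastic T →
      ∃! x : (Fin n → Fin n → Fin n → Fin n → ℝ) × (Fin n → Fin n → Fin n → Fin n → ℝ)
          × (Fin n → Fin n → Fin n → Fin n → ℝ),
        MemA p x.1 ∧ MemB p x.2.1 ∧ MemC p x.2.2 ∧ T = x.1 + x.2.1 + x.2.2)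
    ∧ (∀ A B C : Fin n → Fin n → Fin n → Fin n → ℝ,
        MemA p A → MemB p B → MemC p C → tdot (A + B) C = 0) :=
  pointwise_helmholtz_decomposition_general n p
end

section
/- Let n ≥ 1 and let f : ℝⁿ → Sym²(ℝⁿ) be a Schwartz symmetric-matrix-valued field with vanishing elastic X-ray transform, meaning ∫_ℝ ∑_{i,j} f_{ij}(x+tv) v_i q_j dt = 0 for all x ∈ ℝⁿ, unit vectors v, and q ∈ ℝv ∪ v⊥. Suppose moreover ∑_{i,j} ∂_i ∂_j f_{ij} = 0 (double divergence vanishes). Then f = 0. -/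
/-!
Complexify `f` and pass to the Fourier side. For a unit vector `v`, the line integrals of
`⟨f, v ⊗ q⟩` along `v` vanish, so by the Fourier slice theorem `𝓕⟨f, v ⊗ q⟩` vanishes on `v⊥`.
Hence for every frequency `ξ` the symmetric bilinear form `B_ξ(u, w) = ∑ u_i w_j 𝓕f_ij(ξ)`
satisfies `B_ξ(v, q) = 0` for `v ⊥ ξ` and `q ∈ ℝv ∪ v⊥`, which spans everything, so `B_ξ(u, ·) = 0`
for all `u ⊥ ξ`. The double divergence becomes `-4π² B_ξ(ξ, ξ)` on the Fourier side, so
`B_ξ(ξ, ξ) = 0` as well, and a symmetric form with these two properties is zero. Thus `𝓕f = 0`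
and `f = 0`.
-/

open scoped BigOperators
open MeasureTheory
open scoped FourierTransform RealInnerProductSpace LineDeriv SchwartzMap

theorem integral_eq_zero_of_forall_integral_add_smul_eq_zero
    {E F : Type*} [NormedAddCommGroup E] [NormedSpace ℝ E] [SecondCountableTopology E]
    [MeasurableSpace E] [BorelSpace E] {μ : Measure E} [μ.IsAddRightInvariant] [SFinite μ]
    [NormedAddCommGroup F] [NormedSpace ℝ F] [CompleteSpace F]
    {g : E → F} (hg : Integrable g μ) {v : E} (hv : v ≠ 0)
    (hline : ∀ x, ∫ t : ℝ, g (x + t • v) = 0) : ∫ x, g x ∂μ = 0 := by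
  obtain ⟨ℓ, hℓ⟩ := SeparatingDual.exists_eq_one (R := ℝ) hv
  -- `φ (ℓ y - t)` has integral `1` in `t`, and the shear `(t, y) ↦ (t, y + t • v)`
  -- turns it into the weight `φ (ℓ y)`, constant along the lines.
  set φ : ℝ → ℝ := (Set.Icc (0 : ℝ) 1).indicator 1
  have hφ : Integrable φ :=
    (integrable_indicator_iff measurableSet_Icc).2 (integrableOn_const (by simp) (by simp))
  have hφ_one : ∫ t, φ t = 1 := by simp [φ, integral_indicator measurableSet_Icc]
  set G : ℝ × E → F := fun p => φ (ℓ p.2 - p.1) • g p.2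
  have hG : Integrable G (volume.prod μ) := by
    refine (integrable_prod_iff' ?_).2 ⟨Filter.Eventually.of_forall fun y => ?_, ?_⟩
    · have hφm : Measurable φ := measurable_const.indicator measurableSet_Icc
      exact (hφm.comp (by fun_prop)).aestronglyMeasurable.smul hg.1.comp_snd
    · exact (hφ.comp_sub_left (ℓ y)).smul_const (g y)
    · simp only [G, norm_smul, integral_mul_const, integral_sub_left_eq_self fun t => ‖φ t‖]
      exact hg.norm.const_mul _
  set S : ℝ × E → ℝ × E := fun p => (p.1, p.2 + p.1 • v)
  have hS : MeasurePreserving S (volume.prod μ) (volume.prod μ) :=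
    (MeasurePreserving.id _).skew_product (by fun_prop)
      (Filter.Eventually.of_forall fun t => map_add_right_eq_self μ (t • v))
  have hGS : G ∘ S = fun p => φ (ℓ p.2) • g (p.2 + p.1 • v) := by
    funext p
    simp [G, S, hℓ]
  calc ∫ x, g x ∂μ = ∫ p, G p ∂(volume.prod μ) := by
        rw [integral_prod_symm G hG]
        congr 1 with y
        simp only [G]
        rw [integral_smul_const, integral_sub_left_eq_self, hφ_one, one_smul]
    _ = ∫ p, (G ∘ S) p ∂(volume.prod μ) := by
        conv_lhs => rw [← hS.map_eq]
        exact integral_map hS.aemeasurable (by rw [hS.map_eq]; exact hG.aestronglyMeasurable)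
    _ = 0 := by
        rw [integral_prod_symm _ ((hS.integrable_comp hG.aestronglyMeasurable).2 hG), hGS]
        simp [integral_smul, hline]

theorem Real.fourier_eq_zero_of_forall_integral_add_smul_eq_zero
    {V E : Type*} [NormedAddCommGroup V] [InnerProductSpace ℝ V] [FiniteDimensional ℝ V]
    [MeasurableSpace V] [BorelSpace V] [NormedAddCommGroup E] [NormedSpace ℂ E] [CompleteSpace E]
    {f : V → E} (hf : Integrable f) {v ξ : V} (hv : v ≠ 0) (hvξ : ⟪v, ξ⟫ = 0)
    (hline : ∀ x, ∫ t : ℝ, f (x + t • v) = 0) : 𝓕 f ξ = 0 := by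
  rw [Real.fourier_eq]
  refine integral_eq_zero_of_forall_integral_add_smul_eq_zero
    ((Real.fourierIntegral_convergent_iff ξ).2 hf) hv fun x => ?_
  simp_rw [inner_add_left, real_inner_smul_left, hvξ, mul_zero, add_zero]
  simp only [Circle.smul_def, integral_smul, hline, smul_zero]

namespace LinearMap

variable {V M : Type*} [NormedAddCommGroup V] [InnerProductSpace ℝ V] [AddCommGroup M]
  [Module ℝ M]

theorem eq_zero_of_apply_eq_zero_of_forall_inner_eq_zero (L : V →ₗ[ℝ] M) {ξ : V}
    (hξ : L ξ = 0) (hperp : ∀ u, ⟪u, ξ⟫ = 0 → L u = 0) : L = 0 := by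
  ext u
  set c := ⟪ξ, u⟫ / ⟪ξ, ξ⟫
  have horth : ⟪u - c • ξ, ξ⟫ = 0 := by
    rcases eq_or_ne ξ 0 with rfl | hξ0
    · simp
    · rw [inner_sub_left, real_inner_smul_left, div_mul_cancel₀ _ (inner_self_ne_zero.2 hξ0),
        real_inner_comm, sub_self]
  have := hperp _ horth
  rwa [map_sub, map_smul, hξ, smul_zero, sub_zero] at this

theorem eq_zero_of_symm_of_forall_inner_eq_zero (B : V →ₗ[ℝ] V →ₗ[ℝ] M)
    (hB : ∀ u w, B u w = B w u) {ξ : V} (hξ : B ξ ξ = 0)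
    (hperp : ∀ u, ⟪u, ξ⟫ = 0 → B u = 0) : B = 0 := by
  have hcol : B.flip ξ = 0 :=
    (B.flip ξ).eq_zero_of_apply_eq_zero_of_forall_inner_eq_zero hξ fun u hu => by
      simp [hperp u hu]
  ext u w
  have hrow : B.flip w = 0 :=
    (B.flip w).eq_zero_of_apply_eq_zero_of_forall_inner_eq_zero (ξ := ξ)
      (by simpa [hB ξ w] using LinearMap.congr_fun hcol w) fun u hu => by simp [hperp u hu]
  simpa using LinearMap.congr_fun hrow u

end LinearMap

section TensorPairing

variable {ι M : Type*} [Fintype ι] [AddCommGroup M] [Module ℝ M]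

/-- The pairing `⟨A, u ⊗ w⟩`. -/
def tensorPairing (A : ι → ι → M) : EuclideanSpace ℝ ι →ₗ[ℝ] EuclideanSpace ℝ ι →ₗ[ℝ] M :=
  LinearMap.mk₂ ℝ (fun u w => ∑ i, ∑ j, (u i * w j) • A i j)
    (by intros; simp [add_mul, add_smul, Finset.sum_add_distrib])
    (by intros; simp [mul_assoc, mul_smul, Finset.smul_sum])
    (by intros; simp [mul_add, add_smul, Finset.sum_add_distrib])
    (by intros; simp [mul_left_comm _ _ (_ : ℝ), mul_smul, Finset.smul_sum])

@[simp] theorem tensorPairing_apply (A : ι → ι → M) (u w : EuclideanSpace ℝ ι) :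
    tensorPairing A u w = ∑ i, ∑ j, (u i * w j) • A i j := rfl

theorem tensorPairing_comm {A : ι → ι → M} (hA : ∀ i j, A i j = A j i)
    (u w : EuclideanSpace ℝ ι) : tensorPairing A u w = tensorPairing A w u := by
  rw [tensorPairing_apply, Finset.sum_comm]
  simp [hA, mul_comm]

theorem tensorPairing_single [DecidableEq ι] (A : ι → ι → M) (i j : ι) :
    tensorPairing A (EuclideanSpace.single i 1) (EuclideanSpace.single j 1) = A i j := by
  simp

end TensorPairing

namespace SchwartzMap

theorem fourier_lineDerivOp_apply {V E : Type*} [NormedAddCommGroup V] [InnerProductSpace ℝ V]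
    [FiniteDimensional ℝ V] [MeasurableSpace V] [BorelSpace V] [NormedAddCommGroup E]
    [NormedSpace ℂ E] (f : 𝓢(V, E)) (m ξ : V) :
    𝓕 (∂_{m} f) ξ = (2 * Real.pi * Complex.I * ⟪ξ, m⟫) • 𝓕 f ξ := by
  have : (⟪·, m⟫).HasTemperateGrowth := by fun_prop
  rw [fourier_lineDerivOp_eq]
  simp [this, mul_smul]

theorem lineDerivOp_postcompCLM {𝕜 V F G : Type*} [RCLike 𝕜] [NormedAddCommGroup V]
    [NormedSpace ℝ V] [NormedAddCommGroup F] [NormedSpace ℝ F] [NormedSpace 𝕜 F]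
    [NormedAddCommGroup G] [NormedSpace ℝ G] [NormedSpace 𝕜 G]
    (L : F →L[𝕜] G) (f : 𝓢(V, F)) (m : V) :
    ∂_{m} (postcompCLM L f) = postcompCLM L (∂_{m} f) := by
  ext x
  simp only [lineDerivOp_apply_eq_fderiv, postcompCLM_apply]
  exact congrArg (· m) ((L.restrictScalars ℝ).hasFDerivAt.comp x (f.hasFDerivAt x)).fderiv

variable {ι E : Type*} [Fintype ι] [NormedAddCommGroup E]

section Real

variable [NormedSpace ℝ E]

/-- The rank-one elastic X-ray transform `X¹_{v,q} F (x) = ∫ ⟨F(x + t v), v ⊗ q⟩ dt`. -/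
noncomputable def xrayTransform (F : ι → ι → 𝓢(EuclideanSpace ℝ ι, E))
    (v q x : EuclideanSpace ℝ ι) : E :=
  ∫ t : ℝ, tensorPairing F v q (x + t • v)

noncomputable def doubleDiv [DecidableEq ι] (F : ι → ι → 𝓢(EuclideanSpace ℝ ι, E)) :
    𝓢(EuclideanSpace ℝ ι, E) :=
  ∑ i, ∑ j, ∂_{EuclideanSpace.single i (1 : ℝ)} (∂_{EuclideanSpace.single j (1 : ℝ)} (F i j))

theorem doubleDiv_apply [DecidableEq ι] (F : ι → ι → 𝓢(EuclideanSpace ℝ ι, E))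
    (x : EuclideanSpace ℝ ι) :
    doubleDiv F x = ∑ i, ∑ j, fderiv ℝ (fun y => fderiv ℝ (F i j) y (EuclideanSpace.single j 1))
      x (EuclideanSpace.single i 1) := by
  simp only [doubleDiv, sum_apply, lineDerivOp_apply_eq_fderiv]
  rfl

theorem doubleDiv_postcompCLM {𝕜 G : Type*} [RCLike 𝕜] [NormedSpace 𝕜 E] [NormedAddCommGroup G]
    [NormedSpace ℝ G] [NormedSpace 𝕜 G] [DecidableEq ι] (L : E →L[𝕜] G)
    (F : ι → ι → 𝓢(EuclideanSpace ℝ ι, E)) :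
    doubleDiv (fun i j => postcompCLM L (F i j)) = postcompCLM L (doubleDiv F) := by
  simp only [doubleDiv, lineDerivOp_postcompCLM, map_sum]

end Real

theorem xrayTransform_postcompCLM_ofReal (f : ι → ι → 𝓢(EuclideanSpace ℝ ι, ℝ))
    (v q x : EuclideanSpace ℝ ι) :
    xrayTransform (fun i j => postcompCLM Complex.ofRealCLM (f i j)) v q x =
      ∫ t : ℝ, ∑ i, ∑ j, f i j (x + t • v) * v i * q j := by
  rw [xrayTransform, ← integral_complex_ofReal]
  congr 1 with t
  simp only [tensorPairing_apply, sum_apply, smul_apply, postcompCLM_apply,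
    Complex.ofRealCLM_apply, Complex.real_smul]
  push_cast
  exact Finset.sum_congr rfl fun i _ => Finset.sum_congr rfl fun j _ => by ring

variable [NormedSpace ℂ E]

theorem fourier_tensorPairing_apply (F : ι → ι → 𝓢(EuclideanSpace ℝ ι, E))
    (u w ξ : EuclideanSpace ℝ ι) :
    𝓕 (tensorPairing F u w) ξ = tensorPairing (fun i j => 𝓕 (F i j) ξ) u w := by
  simp

theorem fourier_doubleDiv_apply [DecidableEq ι] (F : ι → ι → 𝓢(EuclideanSpace ℝ ι, E))
    (ξ : EuclideanSpace ℝ ι) :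
    𝓕 (doubleDiv F) ξ =
      (2 * Real.pi * Complex.I) ^ 2 • tensorPairing (fun i j => 𝓕 (F i j) ξ) ξ ξ := by
  simp only [doubleDiv, FourierTransform.fourier_sum, sum_apply, fourier_lineDerivOp_apply,
    EuclideanSpace.inner_single_right, one_mul, conj_trivial, tensorPairing_apply,
    Finset.smul_sum, smul_smul]
  refine Finset.sum_congr rfl fun i _ => Finset.sum_congr rfl fun j _ => ?_
  rw [← Complex.coe_smul, smul_smul]
  congr 1
  push_cast
  ring

variable [CompleteSpace E]

theorem tensorPairing_fourier_eq_zero_of_inner_eq_zero (F : ι → ι → 𝓢(EuclideanSpace ℝ ι, E))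
    (hxray : ∀ x v q : EuclideanSpace ℝ ι, ‖v‖ = 1 → ((∃ t : ℝ, q = t • v) ∨ ⟪q, v⟫ = 0) →
      xrayTransform F v q x = 0)
    {ξ u : EuclideanSpace ℝ ι} (hu : ⟪u, ξ⟫ = 0) :
    tensorPairing (fun i j => 𝓕 (F i j) ξ) u = 0 := by
  rcases eq_or_ne u 0 with rfl | hu0
  · exact map_zero _
  set v := ‖u‖⁻¹ • u
  have hv : ‖v‖ = 1 := norm_smul_inv_norm hu0
  have hvξ : ⟪v, ξ⟫ = 0 := by rw [real_inner_smul_left, hu, mul_zero]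
  have hslice (q) (hq : (∃ t : ℝ, q = t • v) ∨ ⟪q, v⟫ = 0) :
      tensorPairing (fun i j => 𝓕 (F i j) ξ) v q = 0 := by
    rw [← fourier_tensorPairing_apply]
    exact Real.fourier_eq_zero_of_forall_integral_add_smul_eq_zero
      (tensorPairing F v q).integrable (norm_ne_zero_iff.1 (hv ▸ one_ne_zero)) hvξ
      fun x => hxray x v q hv hq
  -- `ℝ v` and `v⊥` together span the space of polarizations.
  have hv0 : tensorPairing (fun i j => 𝓕 (F i j) ξ) v = 0 :=
    LinearMap.eq_zero_of_apply_eq_zero_of_forall_inner_eq_zero _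
      (hslice v (Or.inl ⟨1, (one_smul ℝ v).symm⟩)) fun q hq => hslice q (Or.inr hq)
  rw [← smul_inv_smul₀ (norm_ne_zero_iff.2 hu0) u, map_smul, hv0, smul_zero]

theorem eq_zero_of_xrayTransform_eq_zero_of_doubleDiv_eq_zero [DecidableEq ι]
    (F : ι → ι → 𝓢(EuclideanSpace ℝ ι, E)) (hsymm : ∀ i j, F i j = F j i)
    (hxray : ∀ x v q : EuclideanSpace ℝ ι, ‖v‖ = 1 → ((∃ t : ℝ, q = t • v) ∨ ⟪q, v⟫ = 0) →
      xrayTransform F v q x = 0)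
    (hdiv : doubleDiv F = 0) (i j : ι) : F i j = 0 := by
  have hself (ξ) : tensorPairing (fun i j => 𝓕 (F i j) ξ) ξ ξ = 0 := by
    have := fourier_doubleDiv_apply F ξ
    rw [hdiv, FourierTransform.fourier_zero, zero_apply, eq_comm, smul_eq_zero] at this
    exact this.resolve_left (by simp [Real.pi_ne_zero])
  have hB (ξ) : tensorPairing (fun i j => 𝓕 (F i j) ξ) = 0 :=
    LinearMap.eq_zero_of_symm_of_forall_inner_eq_zero _
      (tensorPairing_comm fun i j => by rw [hsymm]) (hself ξ)
      fun _ hu => tensorPairing_fourier_eq_zero_of_inner_eq_zero F hxray hu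
  have hFij : 𝓕 (F i j) = 0 := by
    ext ξ
    simpa [tensorPairing_single] using
      LinearMap.congr_fun₂ (hB ξ) (EuclideanSpace.single i 1) (EuclideanSpace.single j 1)
  simpa using congrArg 𝓕⁻ hFij

end SchwartzMap

theorem rank1_solenoidal_injectivity_general (n : ℕ)
    (f : Fin n → Fin n → SchwartzMap (EuclideanSpace ℝ (Fin n)) ℝ)
    (hsymm : ∀ i j, f i j = f j i)
    (hxray : ∀ (x v q : EuclideanSpace ℝ (Fin n)), ‖v‖ = 1 →
      ((∃ t : ℝ, q = t • v) ∨ inner ℝ q v = (0:ℝ)) →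
      (∫ t : ℝ, ∑ i, ∑ j, f i j (x + t • v) * v i * q j) = 0)
    (hdiv : ∀ x : EuclideanSpace ℝ (Fin n),
      (∑ i, ∑ j, fderiv ℝ
        (fun y => fderiv ℝ (f i j) y (EuclideanSpace.single j 1)) x
        (EuclideanSpace.single i 1)) = 0) :
    ∀ i j, f i j = 0 := by
  have hdiv_zero : SchwartzMap.doubleDiv f = 0 := by
    ext x
    rw [SchwartzMap.doubleDiv_apply, hdiv x, zero_apply]
  intro i j
  have hF := SchwartzMap.eq_zero_of_xrayTransform_eq_zero_of_doubleDiv_eq_zero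
    (fun i j => SchwartzMap.postcompCLM Complex.ofRealCLM (f i j))
    (fun i j => by rw [hsymm])
    (fun x v q hv hq => by
      rw [SchwartzMap.xrayTransform_postcompCLM_ofReal, hxray x v q hv hq, Complex.ofReal_zero])
    (by rw [SchwartzMap.doubleDiv_postcompCLM, hdiv_zero, map_zero]) i j
  ext x
  simpa using congrArg (· x) hF

/-- A Schwartz symmetric-matrix field `f` on ℝⁿ whose elastic X-ray
transform vanishes for all directions `v` and polarizations `q ∈ ℝv ∪ v⊥`, and whose
double divergence `∑ ∂_i ∂_j f_{ij}` vanishes, is identically zero. -/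
theorem rank1_solenoidal_injectivity (n : ℕ) (hn : 1 ≤ n)
    (f : Fin n → Fin n → SchwartzMap (EuclideanSpace ℝ (Fin n)) ℝ)
    (hsymm : ∀ i j, f i j = f j i)
    (hxray : ∀ (x v q : EuclideanSpace ℝ (Fin n)), ‖v‖ = 1 →
      ((∃ t : ℝ, q = t • v) ∨ inner ℝ q v = (0:ℝ)) →
      (∫ t : ℝ, ∑ i, ∑ j, f i j (x + t • v) * v i * q j) = 0)
    (hdiv : ∀ x : EuclideanSpace ℝ (Fin n),
      (∑ i, ∑ j, fderiv ℝ
        (fun y => fderiv ℝ (f i j) y (EuclideanSpace.single j 1)) x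
        (EuclideanSpace.single i 1)) = 0) :
    ∀ i j, f i j = 0 :=
  rank1_solenoidal_injectivity_general n f hsymm hxray hdiv
end

section
/- Let m ≥ 1 and let h be a Schwartz elastic (m−1)-tensor field on ℝⁿ. Define f = ε(D²h), the elastic symmetrization of the second derivative tensor (D²h)_{iji₁…i_{2(m−1)}} = ∂_i ∂_j h_{i₁…i_{2(m−1)}}. Then the elastic X-ray transform of f vanishes: for all x ∈ ℝⁿ, unit v, and q ∈ ℝv ∪ v⊥, ∫_ℝ ⟨f(x+tv), (v⊗q)^{⊗m}⟩ dt = 0. -/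
/-!
Contracting `ε(T)` against `(v ⊗ q)^{⊗m}` moves the symmetrization onto the weight: permuting the
index pairs leaves `∏ (v ⊗ q)(I r)` unchanged, and swapping inside a pair replaces `v ⊗ q` by
`q ⊗ v`. For `T = D²h` the first pair carries the Hessian, which by symmetry of second derivatives
contracts with either of `v ⊗ q`, `q ⊗ v` to `∂_v ∂_q h`. Hence the integrand is a finite linear
combination of functions `∂_v g` with `g = ∂_q h_T` Schwartz, and `∫ ∂_v g (x + t v) dt = 0` by the
fundamental theorem of calculus, `g` decaying along the line.
-/

open MeasureTheory
open scoped SchwartzMap LineDeriv Nat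

namespace SchwartzMap

variable {E F : Type*} [NormedAddCommGroup E] [NormedSpace ℝ E]
  [NormedAddCommGroup F] [NormedSpace ℝ F]

theorem integrable_comp_line (u : 𝓢(E, F)) (x : E) {v : E} (hv : v ≠ 0) :
    Integrable (fun t : ℝ => u (x + t • v)) := by
  have hanti : AntilipschitzWith ‖v‖₊⁻¹ (fun t : ℝ => x + t • v) := by
    refine AntilipschitzWith.of_le_mul_dist fun s t => ?_
    rw [dist_add_left, dist_eq_norm, dist_eq_norm, ← sub_smul, norm_smul, NNReal.coe_inv,
      coe_nnnorm, mul_comm, mul_inv_cancel_right₀ (norm_ne_zero_iff.mpr hv)]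
  exact (compCLMOfAntilipschitz ℝ (by fun_prop) hanti u).integrable

theorem integrable_fderiv_apply_comp_line (u : 𝓢(E, F)) (x v : E) :
    Integrable (fun t : ℝ => fderiv ℝ u (x + t • v) v) := by
  rcases eq_or_ne v 0 with rfl | hv
  · simp
  · exact integrable_comp_line (∂_{v} u) x hv

theorem integral_fderiv_apply_comp_line_eq_zero (u : 𝓢(E, F)) (x v : E) :
    ∫ t : ℝ, fderiv ℝ u (x + t • v) v = 0 := by
  rcases eq_or_ne v 0 with rfl | hv
  · simp
  refine integral_eq_zero_of_hasDerivAt_of_integrable (f := fun t => u (x + t • v))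
    (fun t => ?_) (integrable_fderiv_apply_comp_line u x v) (integrable_comp_line u x hv)
  exact (u.hasFDerivAt _).comp_hasDerivAt t
    (by simpa using ((hasDerivAt_id t).smul_const v).const_add x)

theorem integral_sum_smul_fderiv_fderiv_apply_comp_line_eq_zero {κ : Type*} (S : Finset κ)
    (c : κ → ℝ) (u : κ → 𝓢(E, F)) (x v w : E) :
    ∫ t : ℝ, ∑ i ∈ S, c i • fderiv ℝ (fun z => fderiv ℝ (u i) z w) (x + t • v) v = 0 := by
  have hint (i : κ) : Integrable fun t : ℝ =>
      c i • fderiv ℝ (fun z => fderiv ℝ (u i) z w) (x + t • v) v :=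
    (integrable_fderiv_apply_comp_line (∂_{w} (u i)) x v).smul (c i)
  rw [integral_finsetSum S fun i _ => hint i]
  refine Finset.sum_eq_zero fun i _ => ?_
  rw [integral_smul]
  exact smul_eq_zero_of_right _ (integral_fderiv_apply_comp_line_eq_zero (∂_{w} (u i)) x v)

end SchwartzMap

section SecondDerivative

variable {𝕜 E F : Type*} [NontriviallyNormedField 𝕜] [NormedAddCommGroup E] [NormedSpace 𝕜 E]
  [NormedAddCommGroup F] [NormedSpace 𝕜 F]

theorem fderiv_fderiv_apply_const {f : E → F} {y : E} (hf : DifferentiableAt 𝕜 (fderiv 𝕜 f) y)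
    (a b : E) : fderiv 𝕜 (fun z => fderiv 𝕜 f z b) y a = fderiv 𝕜 (fderiv 𝕜 f) y a b := by
  simp [fderiv_clm_apply hf (differentiableAt_const b)]

end SecondDerivative

namespace EuclideanSpace

variable {ι F : Type*} [Fintype ι] [DecidableEq ι] [NormedAddCommGroup F] [NormedSpace ℝ F]

theorem sum_smul_bilinear_single
    (B : EuclideanSpace ℝ ι →L[ℝ] EuclideanSpace ℝ ι →L[ℝ] F) (v w : EuclideanSpace ℝ ι) :
    ∑ p : ι × ι, (v p.1 * w p.2) • B (single p.1 1) (single p.2 1) = B v w := by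
  conv_rhs => rw [← (basisFun ι ℝ).sum_repr v, ← (basisFun ι ℝ).sum_repr w]
  simp [Fintype.sum_prod_type, Finset.smul_sum, mul_smul]
  rw [Finset.sum_comm]
  exact Finset.sum_congr rfl fun i _ => Finset.sum_congr rfl fun j _ => smul_comm _ _ _

end EuclideanSpace

section ElasticTensor

variable {ι : Type*} {m : ℕ}

def pairSwap (b : Bool) (p : ι × ι) : ι × ι := if b then (p.2, p.1) else p

theorem pairSwap_involutive (b : Bool) : Function.Involutive (pairSwap (ι := ι) b) := by
  intro p; cases b <;> rfl

noncomputable def elasticSymm (T : (Fin m → ι × ι) → ℝ) (I : Fin m → ι × ι) : ℝ :=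
  (∑ π : Equiv.Perm (Fin m), ∑ s : Fin m → Bool, T (fun r => pairSwap (s r) (I (π r))))
    / ((m ! : ℝ) * 2 ^ m)

variable [Fintype ι]

theorem sum_comp_pairSwap_perm {M : Type*} [AddCommMonoid M] (F : (Fin m → ι × ι) → M)
    (π : Equiv.Perm (Fin m)) (s : Fin m → Bool) :
    ∑ I : Fin m → ι × ι, F (fun r => pairSwap (s r) (I (π r))) = ∑ I, F I :=
  ((Equiv.arrowCongr π.symm (Equiv.refl _)).trans
    (Equiv.piCongrRight fun r => (pairSwap_involutive (s r)).toPerm)).sum_comp F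

theorem sum_elasticSymm_mul_prod (T : (Fin m → ι × ι) → ℝ) (w : ι × ι → ℝ) :
    ∑ I, elasticSymm T I * ∏ r, w (I r) =
      (∑ s : Fin m → Bool, ∑ J, T J * ∏ r, w (pairSwap (s r) (J r))) / 2 ^ m := by
  have hπ : ∀ π : Equiv.Perm (Fin m), ∑ I : Fin m → ι × ι, ∑ s : Fin m → Bool,
      T (fun r => pairSwap (s r) (I (π r))) * ∏ r, w (I r) =
        ∑ s : Fin m → Bool, ∑ J, T J * ∏ r, w (pairSwap (s r) (J r)) := by
    intro π
    rw [Finset.sum_comm]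
    refine Finset.sum_congr rfl fun s _ => ?_
    rw [← sum_comp_pairSwap_perm (fun J => T J * ∏ r, w (pairSwap (s r) (J r))) π s]
    refine Finset.sum_congr rfl fun I _ => congrArg (_ * ·) ?_
    simp only [pairSwap_involutive _ _]
    exact (Equiv.prod_comp π fun r => w (I r)).symm
  simp only [elasticSymm, div_mul_eq_mul_div, ← Finset.sum_div, Finset.sum_mul]
  rw [Finset.sum_comm, Finset.sum_congr rfl fun π _ => hπ π, Finset.sum_const, Finset.card_univ,
    Fintype.card_perm, Fintype.card_fin, nsmul_eq_mul, mul_div_mul_left _ _ (by positivity)]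

end ElasticTensor

section HessianTensor

variable {ι : Type*} [Fintype ι] [DecidableEq ι] {k : ℕ}

def outerProd (v q : EuclideanSpace ℝ ι) (p : ι × ι) : ℝ := v p.1 * q p.2

noncomputable def hessianTensor (H : (Fin k → ι × ι) → EuclideanSpace ℝ ι → ℝ)
    (J : Fin (k + 1) → ι × ι) (x : EuclideanSpace ℝ ι) : ℝ :=
  fderiv ℝ (fun y => fderiv ℝ (H (fun r => J r.succ)) y (EuclideanSpace.single (J 0).2 1)) x
    (EuclideanSpace.single (J 0).1 1)

theorem sum_outerProd_pairSwap_mul_fderiv_fderiv {u : EuclideanSpace ℝ ι → ℝ}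
    {y : EuclideanSpace ℝ ι} (hu : ContDiffAt ℝ 2 u y) (b : Bool) (v q : EuclideanSpace ℝ ι) :
    ∑ p : ι × ι, outerProd v q (pairSwap b p) *
        fderiv ℝ (fun z => fderiv ℝ u z (EuclideanSpace.single p.2 1)) y
          (EuclideanSpace.single p.1 1) =
      fderiv ℝ (fun z => fderiv ℝ u z q) y v := by
  have hd : DifferentiableAt ℝ (fderiv ℝ u) y :=
    (hu.fderiv_right (m := 1) le_rfl).differentiableAt one_ne_zero
  simp only [fderiv_fderiv_apply_const hd]
  cases b
  · exact EuclideanSpace.sum_smul_bilinear_single _ v q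
  · rw [hu.isSymmSndFDerivAt (by simp) v q,
      ← EuclideanSpace.sum_smul_bilinear_single _ q v]
    simp only [outerProd, pairSwap, smul_eq_mul, mul_comm (v _)]
    rfl

theorem sum_hessianTensor_mul_prod {H : (Fin k → ι × ι) → EuclideanSpace ℝ ι → ℝ}
    (hH : ∀ T, ContDiff ℝ 2 (H T)) (s : Fin (k + 1) → Bool) (v q y : EuclideanSpace ℝ ι) :
    ∑ J, hessianTensor H J y * ∏ r, outerProd v q (pairSwap (s r) (J r)) =
      ∑ T, (∏ r : Fin k, outerProd v q (pairSwap (s r.succ) (T r))) *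
        fderiv ℝ (fun z => fderiv ℝ (H T) z q) y v := by
  rw [← (Fin.consEquiv fun _ => ι × ι).sum_comp, Fintype.sum_prod_type, Finset.sum_comm]
  refine Finset.sum_congr rfl fun T _ => ?_
  rw [← sum_outerProd_pairSwap_mul_fderiv_fderiv (hH T).contDiffAt (s 0), Finset.mul_sum]
  refine Finset.sum_congr rfl fun p _ => ?_
  simp only [Fin.consEquiv_apply, hessianTensor, Fin.prod_univ_succ, Fin.cons_zero, Fin.cons_succ]
  ring

end HessianTensor

theorem hessian_in_kernel_all_ranks_general (n k : ℕ)
    (h : (Fin k → Fin n × Fin n) → SchwartzMap (EuclideanSpace ℝ (Fin n)) ℝ)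
    (f : (Fin (k+1) → Fin n × Fin n) → EuclideanSpace ℝ (Fin n) → ℝ)
    (hf : f = fun I x =>
      (∑ π : Equiv.Perm (Fin (k+1)), ∑ s : Fin (k+1) → Bool,
        (fun J : Fin (k+1) → Fin n × Fin n =>
          fderiv ℝ (fun y =>
              fderiv ℝ (h (fun r : Fin k => J r.succ)) y
                (EuclideanSpace.single (J 0).2 1)) x
            (EuclideanSpace.single (J 0).1 1))
        (fun r => if s r then ((I (π r)).2, (I (π r)).1) else I (π r)))
      / ((Nat.factorial (k+1) : ℝ) * 2 ^ (k+1)))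
    (x v q : EuclideanSpace ℝ (Fin n)) :
    (∫ t : ℝ, ∑ I : Fin (k+1) → Fin n × Fin n,
      f I (x + t • v) * ∏ r, (v (I r).1 * q (I r).2)) = 0 := by
  have hf_elasticSymm :
      f = fun I y => elasticSymm (fun J => hessianTensor (fun T => ⇑(h T)) J y) I := hf
  have hcontract : ∀ y, ∑ I, f I y * ∏ r, (v (I r).1 * q (I r).2) =
      ∑ T, (∑ s : Fin (k + 1) → Bool,
        (∏ r : Fin k, outerProd v q (pairSwap (s r.succ) (T r))) / 2 ^ (k + 1)) •
          fderiv ℝ (fun z => fderiv ℝ (h T) z q) y v := by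
    intro y
    rw [hf_elasticSymm]
    refine (sum_elasticSymm_mul_prod _ (outerProd v q)).trans ?_
    simp only [sum_hessianTensor_mul_prod (fun T => (h T).smooth 2), Finset.sum_div,
      Finset.sum_mul, smul_eq_mul, div_mul_eq_mul_div]
    exact Finset.sum_comm
  simp_rw [hcontract]
  exact SchwartzMap.integral_sum_smul_fderiv_fderiv_apply_comp_line_eq_zero _ _ h x v q

/-- For `m = k+1 ≥ 1` and a Schwartz elastic `(m-1)`-tensor field `h`
(components indexed by `m-1` pairs of indices), the elastic X-ray transform of
`f = ε(D²h)` (elastic symmetrization of the second derivative tensor, realized as the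
average over permutations of the `m` index pairs and swaps within each pair) vanishes
for every point `x`, unit direction `v` and polarization `q ∈ ℝv ∪ v⊥`. -/
theorem hessian_in_kernel_all_ranks (n k : ℕ)
    (h : (Fin k → Fin n × Fin n) → SchwartzMap (EuclideanSpace ℝ (Fin n)) ℝ)
    (f : (Fin (k+1) → Fin n × Fin n) → EuclideanSpace ℝ (Fin n) → ℝ)
    (hf : f = fun I x =>
      (∑ π : Equiv.Perm (Fin (k+1)), ∑ s : Fin (k+1) → Bool,
        (fun J : Fin (k+1) → Fin n × Fin n =>
          fderiv ℝ (fun y =>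
              fderiv ℝ (h (fun r : Fin k => J r.succ)) y
                (EuclideanSpace.single (J 0).2 1)) x
            (EuclideanSpace.single (J 0).1 1))
        (fun r => if s r then ((I (π r)).2, (I (π r)).1) else I (π r)))
      / ((Nat.factorial (k+1) : ℝ) * 2 ^ (k+1)))
    (x v q : EuclideanSpace ℝ (Fin n)) (hv : ‖v‖ = 1)
    (hq : (∃ t : ℝ, q = t • v) ∨ inner ℝ q v = (0:ℝ)) :
    (∫ t : ℝ, ∑ I : Fin (k+1) → Fin n × Fin n,
      f I (x + t • v) * ∏ r, (v (I r).1 * q (I r).2)) = 0 :=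
  hessian_in_kernel_all_ranks_general n k h f hf x v q
end
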